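/- For every connected graph G, γ_rdR(G) ≥ γ(G) + γ_r(G), where γ is the domination number and γ_r the restrained domination number. -/

import Mathlib

open Finset

/-- A restrained double Roman dominating function. -/
def IsRDRD {V : Type*} (G : SimpleGraph V) (f : V → ℕ) : Prop :=
  (∀ v, f v ≤ 3) ∧
  (∀ v, f v = 0 →
    (∃ u, G.Adj v u ∧ f u = 3) ∨
    (∃ u w, G.Adj v u ∧ G.Adj v w ∧ u ≠ w ∧ f u = 2 ∧ f w = 2)) ∧
  (∀ v, f v = 1 → ∃ u, G.Adj v u ∧ 2 ≤ f u) ∧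
  (∀ v, f v = 0 → ∃ u, G.Adj v u ∧ f u = 0)

/-- The restrained double Roman domination number. -/
noncomputable def rdrNum {V : Type*} [Fintype V] (G : SimpleGraph V) : ℕ :=
  sInf {k | ∃ f : V → ℕ, IsRDRD G f ∧ ∑ v, f v = k}

def IsDomSet {V : Type*} (G : SimpleGraph V) (S : Set V) : Prop :=
  ∀ v ∉ S, ∃ u ∈ S, G.Adj v u

def IsRDomSet {V : Type*} (G : SimpleGraph V) (S : Set V) : Prop :=
  IsDomSet G S ∧ ∀ v ∉ S, ∃ u ∉ S, G.Adj v u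

def IsR2DomSet {V : Type*} (G : SimpleGraph V) (S : Set V) : Prop :=
  (∀ v ∉ S, ∃ u w, u ∈ S ∧ w ∈ S ∧ u ≠ w ∧ G.Adj v u ∧ G.Adj v w) ∧
  ∀ v ∉ S, ∃ u ∉ S, G.Adj v u

noncomputable def domNum {V : Type*} [Fintype V] (G : SimpleGraph V) : ℕ :=
  sInf {k | ∃ S : Finset V, IsDomSet G ↑S ∧ S.card = k}

noncomputable def rDomNum {V : Type*} [Fintype V] (G : SimpleGraph V) : ℕ :=
  sInf {k | ∃ S : Finset V, IsRDomSet G ↑S ∧ S.card = k}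

noncomputable def r2DomNum {V : Type*} [Fintype V] (G : SimpleGraph V) : ℕ :=
  sInf {k | ∃ S : Finset V, IsR2DomSet G ↑S ∧ S.card = k}

/-- A restrained Roman dominating function. -/
def IsRRD {V : Type*} (G : SimpleGraph V) (f : V → ℕ) : Prop :=
  (∀ v, f v ≤ 2) ∧
  (∀ v, f v = 0 → ∃ u, G.Adj v u ∧ f u = 2) ∧
  (∀ v, f v = 0 → ∃ u, G.Adj v u ∧ f u = 0)

noncomputable def rrNum {V : Type*} [Fintype V] (G : SimpleGraph V) : ℕ :=
  sInf {k | ∃ f : V → ℕ, IsRRD G f ∧ ∑ v, f v = k}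

/-- A star: all edges are incident to one common vertex. -/
def IsStar {V : Type*} (G : SimpleGraph V) : Prop :=
  ∃ x : V, ∀ ⦃a b : V⦄, G.Adj a b → a = x ∨ b = x

/-- The join of two graphs. -/
def joinG {α β : Type*} (G : SimpleGraph α) (H : SimpleGraph β) : SimpleGraph (α ⊕ β) :=
  SimpleGraph.fromRel (fun x y => match x, y with
    | Sum.inl a, Sum.inl b => G.Adj a b
    | Sum.inr a, Sum.inr b => H.Adj a b
    | Sum.inl _, Sum.inr _ => True
    | Sum.inr _, Sum.inl _ => True)

/-- The disjoint union of two graphs. -/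
def dUnion {α β : Type*} (G : SimpleGraph α) (H : SimpleGraph β) : SimpleGraph (α ⊕ β) :=
  SimpleGraph.fromRel (fun x y => match x, y with
    | Sum.inl a, Sum.inl b => G.Adj a b
    | Sum.inr a, Sum.inr b => H.Adj a b
    | _, _ => False)

/-! For a minimum restrained double Roman dominating function `f`, the vertices with `f v ≥ 2`
form a dominating set and those with `f v ≥ 1` a restrained dominating set; a vertex lies in at
most `f v` of these two sets, so their sizes add up to at most the weight of `f`. -/

section Domination

variable {V : Type*} {G : SimpleGraph V} {f : V → ℕ}

theorem domNum_le_card [Fintype V] {S : Finset V} (hS : IsDomSet G ↑S) : domNum G ≤ #S :=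
  Nat.sInf_le ⟨S, hS, rfl⟩

theorem rDomNum_le_card [Fintype V] {S : Finset V} (hS : IsRDomSet G ↑S) : rDomNum G ≤ #S :=
  Nat.sInf_le ⟨S, hS, rfl⟩

theorem exists_isRDRD_sum_eq_rdrNum [Fintype V] (G : SimpleGraph V) :
    ∃ f : V → ℕ, IsRDRD G f ∧ ∑ v, f v = rdrNum G :=
  Nat.sInf_mem (s := {k | ∃ f : V → ℕ, IsRDRD G f ∧ ∑ v, f v = k})
    ⟨_, fun _ => 3, ⟨fun _ => le_rfl, by simp, by simp, by simp⟩, rfl⟩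

theorem IsRDRD.isDomSet_two_le (hf : IsRDRD G f) : IsDomSet G {v | 2 ≤ f v} := by
  obtain ⟨-, h0, h1, -⟩ := hf
  intro v hv
  simp only [Set.mem_ofPred_eq, not_le] at hv
  obtain hv0 | hv1 : f v = 0 ∨ f v = 1 := by omega
  · rcases h0 v hv0 with ⟨u, hvu, hu⟩ | ⟨u, _, hvu, -, -, hu, -⟩
    · exact ⟨u, by simp [hu], hvu⟩
    · exact ⟨u, by simp [hu], hvu⟩
  · obtain ⟨u, hvu, hu⟩ := h1 v hv1
    exact ⟨u, hu, hvu⟩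

theorem IsRDRD.isRDomSet_one_le (hf : IsRDRD G f) : IsRDomSet G {v | 1 ≤ f v} := by
  obtain ⟨-, h0, -, h00⟩ := hf
  simp only [IsRDomSet, IsDomSet, Set.mem_ofPred_eq, Nat.one_le_iff_ne_zero, not_not]
  refine ⟨fun v hv => ?_, fun v hv => (h00 v hv).imp fun _ h => h.symm⟩
  rcases h0 v hv with ⟨u, hvu, hu⟩ | ⟨u, _, hvu, -, -, hu, -⟩
  · exact ⟨u, by omega, hvu⟩
  · exact ⟨u, by omega, hvu⟩

end Domination

theorem card_filter_two_le_add_card_filter_one_le_le_sum {ι : Type*} (s : Finset ι)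
    (f : ι → ℕ) : #{i ∈ s | 2 ≤ f i} + #{i ∈ s | 1 ≤ f i} ≤ ∑ i ∈ s, f i := by
  rw [card_filter, card_filter, ← sum_add_distrib]
  exact sum_le_sum fun i _ => by split_ifs <;> omega

theorem stmt_8_general {V : Type*} [Fintype V] (G : SimpleGraph V) :
    domNum G + rDomNum G ≤ rdrNum G := by
  classical
  obtain ⟨f, hf, hsum⟩ := exists_isRDRD_sum_eq_rdrNum G
  calc domNum G + rDomNum G ≤ #{v | 2 ≤ f v} + #{v | 1 ≤ f v} :=
        add_le_add (domNum_le_card (by simpa using hf.isDomSet_two_le))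
          (rDomNum_le_card (by simpa using hf.isRDomSet_one_le))
    _ ≤ ∑ v, f v := card_filter_two_le_add_card_filter_one_le_le_sum univ f
    _ = rdrNum G := hsum

theorem stmt_8 {V : Type*} [Fintype V] (G : SimpleGraph V) (hconn : G.Connected) :
    domNum G + rDomNum G ≤ rdrNum G :=
  stmt_8_general G
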